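/- arXiv:0707.2952 — 7 statements merged into one kernel-verified Lean document; each statement's English description precedes it below -/
import Mathlib

section
/- Let f : ℝ → ℝ be non-decreasing, right-continuous, and bounded on an interval [α', α + 1], and suppose liminf_{h→0⁺} (f(x+h)-f(x))/h ≥ p for all x ∈ [α', α]. Then f(α) - f(α') ≥ p(α - α'). -/
/-! Fix `q < p`. The set `A` of points `x ∈ [α', α]` with `q (x - α') ≤ f x - f α'` contains
its supremum `c`, since a monotone `f` satisfies `f x ≤ f c` for `x < c`. If `c < α`, the lower
right Dini derivative at `c` exceeds `q`, which produces points of `A` to the right of `c`;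
hence `c = α`. Finally let `q → p`. -/

open Filter Set Topology

theorem Monotone.mul_sub_le_sub_of_frequently_mul_le {f : ℝ → ℝ} (hf : Monotone f)
    {a b q : ℝ} (hab : a ≤ b)
    (h : ∀ x ∈ Ico a b, ∃ᶠ t in 𝓝[>] 0, q * t ≤ f (x + t) - f x) :
    q * (b - a) ≤ f b - f a := by
  obtain hq | hq := le_total q 0
  · nlinarith [hf hab]
  set A : Set ℝ := {x | x ∈ Icc a b ∧ q * (x - a) ≤ f x - f a}
  have ha : a ∈ A := ⟨⟨le_rfl, hab⟩, by simp⟩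
  have hA : BddAbove A := ⟨b, fun x hx => hx.1.2⟩
  set c := sSup A
  have hac : a ≤ c := le_csSup hA ha
  have hcb : c ≤ b := csSup_le ⟨a, ha⟩ fun x hx => hx.1.2
  have hc : c ∈ A := by
    refine ⟨⟨hac, hcb⟩, ?_⟩
    have below : ∀ y < c, q * (y - a) ≤ f c - f a := fun y hy => by
      obtain ⟨x, hxA, hyx⟩ := exists_lt_of_lt_csSup ⟨a, ha⟩ hy
      nlinarith [hxA.2, hf (le_csSup hA hxA)]
    have hcont : ContinuousWithinAt (fun y => q * (y - a)) (Iio c) c := by fun_prop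
    exact _root_.le_of_tendsto hcont (eventually_nhdsWithin_of_forall below)
  have hc_eq : c = b := by
    by_contra hne
    have hlt : c < b := lt_of_le_of_ne hcb hne
    have hgap : Ioo 0 (b - c) ∈ 𝓝[>] (0 : ℝ) := Ioo_mem_nhdsGT (by linarith)
    obtain ⟨t, hqt, ht0, htb⟩ := ((h c ⟨hac, hlt⟩).and_eventually hgap).exists
    have hct : c + t ∈ A := ⟨⟨by linarith, by linarith⟩, by linarith [hc.2]⟩
    linarith [le_csSup hA hct]
  simpa [hc_eq] using hc.2

theorem eventually_mul_le_sub_of_lt_liminf_slope {f : ℝ → ℝ} {x q : ℝ}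
    (hq : (q : EReal) <
      liminf (fun t : ℝ => (((f (x + t) - f x) / t : ℝ) : EReal)) (𝓝[>] 0)) :
    ∀ᶠ t in 𝓝[>] 0, q * t ≤ f (x + t) - f x := by
  filter_upwards [eventually_lt_of_lt_liminf hq, self_mem_nhdsWithin] with t hlt (ht : 0 < t)
  exact ((lt_div_iff₀ ht).mp (EReal.coe_lt_coe_iff.mp hlt)).le

theorem stmt1_general (f : ℝ → ℝ) (hmono : Monotone f)
    (α' α p : ℝ) (hle : α' ≤ α)
    (hd : ∀ x ∈ Set.Icc α' α,
      (p : EReal) ≤ Filter.liminf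
        (fun h : ℝ => (((f (x + h) - f x) / h : ℝ) : EReal)) (nhdsWithin 0 (Set.Ioi 0))) :
    p * (α - α') ≤ f α - f α' := by
  have below : ∀ q < p, q * (α - α') ≤ f α - f α' := fun q hqp =>
    hmono.mul_sub_le_sub_of_frequently_mul_le hle fun x hx =>
      (eventually_mul_le_sub_of_lt_liminf_slope
        ((EReal.coe_lt_coe_iff.mpr hqp).trans_le (hd x (Ico_subset_Icc_self hx)))).frequently
  have hcont : ContinuousWithinAt (fun q => q * (α - α')) (Iio p) p := by fun_prop
  exact le_of_tendsto hcont (eventually_nhdsWithin_of_forall below)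

theorem stmt1 (f : ℝ → ℝ) (hmono : Monotone f)
    (hrc : ∀ a : ℝ, ContinuousWithinAt f (Set.Ici a) a)
    (α' α p : ℝ) (hle : α' ≤ α)
    (hbdd : BddAbove (f '' Set.Icc α' (α + 1)) ∧ BddBelow (f '' Set.Icc α' (α + 1)))
    (hd : ∀ x ∈ Set.Icc α' α,
      (p : EReal) ≤ Filter.liminf
        (fun h : ℝ => (((f (x + h) - f x) / h : ℝ) : EReal)) (nhdsWithin 0 (Set.Ioi 0))) :
    p * (α - α') ≤ f α - f α' :=
  stmt1_general f hmono α' α p hle hd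
end

section
/- Let ν be an admissible profile with dual profile ν'(α') := ⌊⌊ α' + inf{α : ν(α) - α > α'} ⌋⌋, where ⌊⌊β⌋⌋ equals -∞ if β < 0, β if 0 ≤ β ≤ 1, and 1 if β > 1. Then ν' is right-continuous. -/
/-! The set `{α : ν α - α > α'}` is cut out by a strict inequality, so `α' ↦ α' + inf {…}`
is upper semicontinuous (its strict sublevel sets are unions of open sets); it is also monotone.
A monotone upper semicontinuous function is right-continuous, `clamp` is again monotone and upper
semicontinuous, and right-continuity survives composing two monotone right-continuous maps. -/

noncomputable section
open Filter Set Topology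

/-- Clamp an extended real into `{-∞} ∪ [0,1]`. -/
def clamp (b : EReal) : EReal := if b < 0 then ⊥ else min b 1

/-- The dual profile `ν'(α') = ⌊⌊ α' + inf{α : ν(α) - α > α'} ⌋⌋` (with `inf ∅ = +∞`). -/
def dualProfile (ν : ℝ → EReal) (a' : ℝ) : EReal :=
  clamp ((a' : EReal) +
    sInf ((fun a : ℝ => (a : EReal)) '' {a : ℝ | (a' : EReal) < ν a - (a : EReal)}))

theorem Monotone.continuousWithinAt_Ici_of_upperSemicontinuousAt {α β : Type*}
    [TopologicalSpace α] [Preorder α] [LinearOrder β] [TopologicalSpace β] [OrderTopology β]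
    {f : α → β} (hf : Monotone f) {a : α} (hu : UpperSemicontinuousAt f a) :
    ContinuousWithinAt f (Ici a) a :=
  continuousWithinAt_iff_lower_upperSemicontinuousWithinAt.2
    ⟨fun _ hy => eventually_nhdsWithin_of_forall fun _ hx => hy.trans_le (hf hx),
      hu.upperSemicontinuousWithinAt _⟩

lemma clamp_monotone : Monotone clamp := by
  intro x y hxy
  unfold clamp
  split_ifs with hx
  · exact bot_le
  · exact bot_le
  · exact absurd (hxy.trans_lt ‹y < 0›) hx
  · exact min_le_min_right 1 hxy

lemma clamp_le_min_one (x : EReal) : clamp x ≤ min x 1 := by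
  unfold clamp
  split_ifs
  · exact bot_le
  · exact le_rfl

lemma clamp_upperSemicontinuous : UpperSemicontinuous clamp := by
  intro x y hxy
  rcases lt_or_ge x 0 with hx | hx
  · filter_upwards [Iio_mem_nhds hx] with x' hx'
    have hbot : clamp x' = clamp x := by simp only [clamp, if_pos hx, if_pos (mem_Iio.1 hx')]
    rwa [hbot]
  · have hmin : min x 1 < y := by rwa [clamp, if_neg hx.not_gt] at hxy
    filter_upwards [(continuous_id.min continuous_const).continuousAt.eventually_lt
      continuousAt_const hmin] with x' hx'
    exact (clamp_le_min_one x').trans_lt hx'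

def shiftedInf (f : ℝ → EReal) (b : ℝ) : EReal :=
  b + sInf ((fun a : ℝ => (a : EReal)) '' {a | (b : EReal) < f a})

lemma dualProfile_eq_clamp_comp (ν : ℝ → EReal) :
    dualProfile ν = clamp ∘ shiftedInf (fun a => ν a - a) :=
  rfl

lemma shiftedInf_monotone (f : ℝ → EReal) : Monotone (shiftedInf f) := fun _ _ hxy =>
  have hxy' := EReal.coe_le_coe_iff.2 hxy
  add_le_add hxy' (sInf_le_sInf (image_mono fun _ ha => hxy'.trans_lt ha))

lemma shiftedInf_lt_iff {f : ℝ → EReal} {b : ℝ} {c : EReal} :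
    shiftedInf f b < c ↔ ∃ a, (b : EReal) < f a ∧ ((b + a : ℝ) : EReal) < c := by
  have add_lt_iff (x : EReal) : x + b < c ↔ x < c - b :=
    (EReal.lt_sub_iff_add_lt (.inl (EReal.coe_ne_bot b)) (.inl (EReal.coe_ne_top b))).symm
  rw [shiftedInf, add_comm, add_lt_iff, sInf_lt_iff]
  simp only [mem_image, mem_ofPred_eq, exists_exists_and_eq_and]
  refine exists_congr fun a => and_congr_right fun _ => ?_
  rw [← add_lt_iff, add_comm, EReal.coe_add]

lemma shiftedInf_upperSemicontinuous (f : ℝ → EReal) : UpperSemicontinuous (shiftedInf f) := by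
  refine upperSemicontinuous_iff_isOpen_preimage.2 fun c => ?_
  have hpre : shiftedInf f ⁻¹' Iio c =
      ⋃ a, {b : ℝ | (b : EReal) < f a} ∩ {b | ((b + a : ℝ) : EReal) < c} := by
    ext b
    simp only [mem_preimage, mem_Iio, shiftedInf_lt_iff, mem_iUnion, mem_inter_iff, mem_ofPred_eq]
  rw [hpre]
  exact isOpen_iUnion fun a => (isOpen_lt continuous_coe_real_ereal continuous_const).inter
    (isOpen_lt (continuous_coe_real_ereal.comp (continuous_add_const a)) continuous_const)

theorem stmt5_general (ν : ℝ → EReal) :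
    ∀ a' : ℝ, ContinuousWithinAt (dualProfile ν) (Set.Ici a') a' := by
  intro a'
  rw [dualProfile_eq_clamp_comp]
  have hmono := shiftedInf_monotone fun a => ν a - a
  have hinner := hmono.continuousWithinAt_Ici_of_upperSemicontinuousAt
    (shiftedInf_upperSemicontinuous _ a')
  have hclamp := clamp_monotone.continuousWithinAt_Ici_of_upperSemicontinuousAt
    (clamp_upperSemicontinuous (shiftedInf (fun a => ν a - a) a'))
  exact hclamp.comp hinner fun _ hb => hmono hb

theorem stmt5 (ν : ℝ → EReal)
    (hmono : Monotone ν)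
    (hrc : ∀ a : ℝ, ContinuousWithinAt ν (Set.Ici a) a)
    (hval : ∀ a : ℝ, ν a = ⊥ ∨ (0 ≤ ν a ∧ ν a ≤ 1))
    (hne : ∃ a : ℝ, ν a ≠ ⊥) :
    ∀ a' : ℝ, ContinuousWithinAt (dualProfile ν) (Set.Ici a') a' :=
  stmt5_general ν
end
end

section
/- Let ν be an admissible profile with α_min := inf{α : ν(α) ≥ 0} finite, and let ν' be its dual profile with α'_min := inf{α' : ν'(α') ≥ 0}. Then α'_min = -α_min. -/
/-!
Let `m = α_min`. By monotonicity `{α | ν α ≥ 0}` contains `(m, ∞)` and is contained in `[m, ∞)`.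
Clamping preserves the sign, so `ν'(α') ≥ 0` iff every `α` with `ν α - α > α'` satisfies
`α ≥ -α'`. For `α' = -m` this holds because `ν α - α > -m` forces `ν α ≠ -∞`, hence `ν α ≥ 0` and
`α ≥ m`; for `α' < -m` any `α ∈ (m, -α')` violates it, since there `ν α - α ≥ -α > α'`.
So `-m` is the least point of `{α' | ν' α' ≥ 0}`.
-/

noncomputable section
open Filter Set Topology

lemma clamp_nonneg_iff (b : EReal) : 0 ≤ clamp b ↔ 0 ≤ b := by
  unfold clamp
  split_ifs with h
  · simp [not_le.mpr h]
  · simp [not_lt.mp h]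

namespace EReal

lemma coe_le_sInf_image_coe_iff {S : Set ℝ} {x : ℝ} :
    (x : EReal) ≤ sInf ((↑) '' S) ↔ ∀ a ∈ S, x ≤ a := by
  simp only [le_sInf_iff, forall_mem_image, EReal.coe_le_coe_iff]

lemma sInf_image_coe_lt_coe_iff {S : Set ℝ} {x : ℝ} :
    sInf ((↑) '' S : Set EReal) < x ↔ ∃ a ∈ S, a < x := by
  simp only [sInf_lt_iff, exists_mem_image, EReal.coe_lt_coe_iff]

lemma sInf_image_coe_eq_of_isLeast {S : Set ℝ} {x : ℝ} (h : IsLeast S x) :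
    sInf ((↑) '' S : Set EReal) = x :=
  (coe_strictMono.monotone.map_isLeast h).csInf_eq

lemma coe_add_nonneg_iff (x : ℝ) (y : EReal) : 0 ≤ (x : EReal) + y ↔ ((-x : ℝ) : EReal) ≤ y := by
  rw [add_comm, ← sub_le_iff_le_add (.inl (coe_ne_bot x)) (.inl (coe_ne_top x)), zero_sub, coe_neg]

end EReal

lemma dualProfile_nonneg_iff (ν : ℝ → EReal) (a' : ℝ) :
    0 ≤ dualProfile ν a' ↔ ∀ a : ℝ, (a' : EReal) < ν a - a → -a' ≤ a := by
  rw [dualProfile, clamp_nonneg_iff, EReal.coe_add_nonneg_iff, EReal.coe_le_sInf_image_coe_iff]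
  rfl

section

variable {ν : ℝ → EReal} {m : ℝ}
  (hm : sInf ((↑) '' {a : ℝ | 0 ≤ ν a} : Set EReal) = m)
include hm

lemma le_of_nonneg_of_sInf_eq {a : ℝ} (ha : 0 ≤ ν a) : m ≤ a :=
  EReal.coe_le_sInf_image_coe_iff.mp hm.ge a ha

lemma nonneg_of_lt_of_sInf_eq (hmono : Monotone ν) {a : ℝ} (ha : m < a) : 0 ≤ ν a := by
  obtain ⟨b, hb, hba⟩ := EReal.sInf_image_coe_lt_coe_iff.mp (hm ▸ EReal.coe_lt_coe_iff.mpr ha)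
  exact hb.trans (hmono hba.le)

lemma isLeast_dualProfile_nonneg (hmono : Monotone ν) (hval : ∀ a, ν a ≠ ⊥ → 0 ≤ ν a) :
    IsLeast {a' | 0 ≤ dualProfile ν a'} (-m) := by
  refine ⟨(dualProfile_nonneg_iff ν _).mpr fun a ha => ?_, fun a' ha' => ?_⟩
  · have hbot : ν a ≠ ⊥ := fun h => by simp [h] at ha
    simpa using le_of_nonneg_of_sInf_eq hm (hval a hbot)
  · by_contra! hlt
    obtain ⟨a, hma, hab⟩ := exists_between (lt_neg_of_lt_neg hlt)
    have hνa : 0 ≤ ν a := nonneg_of_lt_of_sInf_eq hm hmono hma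
    have hgap : (a' : EReal) < ν a - a :=
      calc (a' : EReal) < ((-a : ℝ) : EReal) := EReal.coe_lt_coe_iff.mpr (lt_neg_of_lt_neg hab)
        _ = 0 - a := by simp
        _ ≤ ν a - a := EReal.sub_le_sub hνa le_rfl
    linarith [(dualProfile_nonneg_iff ν a').mp ha' a hgap]

end

theorem stmt9_general (ν : ℝ → EReal)
    (hmono : Monotone ν)
    (hval : ∀ a : ℝ, ν a = ⊥ ∨ (0 ≤ ν a ∧ ν a ≤ 1))
    (hfin : ∃ m : ℝ, sInf ((fun a : ℝ => (a : EReal)) '' {a : ℝ | 0 ≤ ν a}) = (m : EReal)) :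
    sInf ((fun a : ℝ => (a : EReal)) '' {a' : ℝ | 0 ≤ dualProfile ν a'}) =
      -sInf ((fun a : ℝ => (a : EReal)) '' {a : ℝ | 0 ≤ ν a}) := by
  obtain ⟨m, hm⟩ := hfin
  have hval' : ∀ a, ν a ≠ ⊥ → 0 ≤ ν a := fun a h => ((hval a).resolve_left h).1
  rw [EReal.sInf_image_coe_eq_of_isLeast (isLeast_dualProfile_nonneg hm hmono hval'), hm,
    EReal.coe_neg]

theorem stmt9 (ν : ℝ → EReal)
    (hmono : Monotone ν)
    (hrc : ∀ a : ℝ, ContinuousWithinAt ν (Set.Ici a) a)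
    (hval : ∀ a : ℝ, ν a = ⊥ ∨ (0 ≤ ν a ∧ ν a ≤ 1))
    (hne : ∃ a : ℝ, ν a ≠ ⊥)
    (hfin : ∃ m : ℝ, sInf ((fun a : ℝ => (a : EReal)) '' {a : ℝ | 0 ≤ ν a}) = (m : EReal)) :
    sInf ((fun a : ℝ => (a : EReal)) '' {a' : ℝ | 0 ≤ dualProfile ν a'}) =
      -sInf ((fun a : ℝ => (a : EReal)) '' {a : ℝ | 0 ≤ ν a}) :=
  stmt9_general ν hmono hval hfin
end
end

section
/- Let ν be an admissible profile with finite α_min and α_max, and let ν' be its dual profile with α'_max := inf{α' : ν'(α') = 1}. Then 1 - α_max ≤ α'_max ≤ 1 - α_min. -/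
noncomputable section
open Filter Set Topology

/-! The upper bound on `α'_max` holds because every `α` with `ν(α) - α > α'` has `ν(α) ≠ -∞`,
so the infimum in the dual profile is at least `α_min`. The lower bound uses that `ν(α_max) = 1`
by right continuity, so `α_max` itself enters that infimum as soon as `α' < 1 - α_max`. -/

lemma clamp_eq_one_iff (b : EReal) : clamp b = 1 ↔ 1 ≤ b := by
  unfold clamp
  split_ifs with h
  · exact iff_of_false (EReal.bot_ne_coe 1) (h.trans zero_lt_one).not_ge
  · simp

lemma sInf_coe_image_le_of_forall_lt_mem {s : Set ℝ} {x : ℝ} (h : ∀ r, x < r → r ∈ s) :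
    sInf ((fun a : ℝ => (a : EReal)) '' s) ≤ (x : EReal) := by
  refine le_of_forall_gt_imp_ge_of_dense fun c hc => ?_
  obtain ⟨r, hxr, hrc⟩ := EReal.lt_iff_exists_real_btwn.mp hc
  exact (sInf_le (mem_image_of_mem _ (h r (EReal.coe_lt_coe_iff.mp hxr)))).trans hrc.le

lemma Monotone.eq_of_sInf_setOf_eq_lt {α : Type*} [PartialOrder α] {ν : ℝ → α}
    (hmono : Monotone ν) {c : α} (hle : ∀ a, ν a ≤ c) {a : ℝ}
    (ha : sInf ((fun x : ℝ => (x : EReal)) '' {x | ν x = c}) < (a : EReal)) : ν a = c := by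
  obtain ⟨_, ⟨b, hb, rfl⟩, hba⟩ := sInf_lt_iff.mp ha
  exact le_antisymm (hle a) (hb ▸ hmono (EReal.coe_lt_coe_iff.mp hba).le)

lemma ContinuousWithinAt.eq_of_forall_gt {α β : Type*} [LinearOrder α] [TopologicalSpace α]
    [OrderTopology α] [DenselyOrdered α] [NoMaxOrder α] [TopologicalSpace β] [T2Space β]
    {f : α → β} {a : α} {c : β} (hf : ContinuousWithinAt f (Ici a) a)
    (h : ∀ x, a < x → f x = c) : f a = c :=
  tendsto_nhds_unique (hf.tendsto.mono_left (nhdsWithin_mono _ Ioi_subset_Ici_self))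
    (tendsto_const_nhds.congr' (eventually_nhdsWithin_of_forall fun x hx => (h x hx).symm))

lemma sub_le_of_dualProfile_eq_one {ν : ℝ → EReal} {M a' : ℝ} (hM : ν M = 1)
    (h : dualProfile ν a' = 1) : 1 - M ≤ a' := by
  by_contra! hlt
  have hmem : (a' : EReal) < ν M - M := by
    rw [hM, ← EReal.coe_one, ← EReal.coe_sub]
    exact EReal.coe_lt_coe (by linarith)
  have hone : (1 : EReal) ≤ ((a' + M : ℝ) : EReal) := by
    rw [EReal.coe_add]
    exact ((clamp_eq_one_iff _).mp h).trans (add_le_add le_rfl (sInf_le (mem_image_of_mem _ hmem)))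
  have : (1 : ℝ) ≤ a' + M := EReal.coe_le_coe_iff.mp hone
  linarith

lemma dualProfile_eq_one_of_lt {ν : ℝ → EReal} (hval : ∀ a, ν a = ⊥ ∨ 0 ≤ ν a) {m a' : ℝ}
    (hm : sInf ((fun a : ℝ => (a : EReal)) '' {a | 0 ≤ ν a}) = m) (ha' : 1 - m < a') :
    dualProfile ν a' = 1 := by
  have hsub : {a : ℝ | (a' : EReal) < ν a - a} ⊆ {a | 0 ≤ ν a} := fun a ha =>
    (hval a).resolve_left fun hbot => by simp [hbot] at ha
  have hinf : (m : EReal) ≤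
      sInf ((fun a : ℝ => (a : EReal)) '' {a : ℝ | (a' : EReal) < ν a - a}) :=
    hm ▸ sInf_le_sInf (image_mono hsub)
  rw [dualProfile, clamp_eq_one_iff]
  calc (1 : EReal) ≤ ((a' + m : ℝ) : EReal) := EReal.coe_le_coe (by linarith)
    _ = a' + m := EReal.coe_add _ _
    _ ≤ _ := add_le_add le_rfl hinf

theorem stmt10_general (ν : ℝ → EReal)
    (hmono : Monotone ν)
    (hrc : ∀ a : ℝ, ContinuousWithinAt ν (Set.Ici a) a)
    (hval : ∀ a : ℝ, ν a = ⊥ ∨ (0 ≤ ν a ∧ ν a ≤ 1))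
    (hminfin : ∃ m : ℝ, sInf ((fun a : ℝ => (a : EReal)) '' {a : ℝ | 0 ≤ ν a}) = (m : EReal))
    (hmaxfin : ∃ m : ℝ, sInf ((fun a : ℝ => (a : EReal)) '' {a : ℝ | ν a = 1}) = (m : EReal)) :
    (1 : EReal) - sInf ((fun a : ℝ => (a : EReal)) '' {a : ℝ | ν a = 1}) ≤
        sInf ((fun a : ℝ => (a : EReal)) '' {a' : ℝ | dualProfile ν a' = 1}) ∧
      sInf ((fun a : ℝ => (a : EReal)) '' {a' : ℝ | dualProfile ν a' = 1}) ≤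
        (1 : EReal) - sInf ((fun a : ℝ => (a : EReal)) '' {a : ℝ | 0 ≤ ν a}) := by
  obtain ⟨M, hM⟩ := hmaxfin
  obtain ⟨m, hm⟩ := hminfin
  have hle : ∀ a, ν a ≤ 1 := fun a => (hval a).elim (fun h => h ▸ bot_le) And.right
  have hνM : ν M = 1 := (hrc M).eq_of_forall_gt fun a ha =>
    hmono.eq_of_sInf_setOf_eq_lt hle (hM ▸ EReal.coe_lt_coe ha)
  rw [hM, hm, ← EReal.coe_one, ← EReal.coe_sub, ← EReal.coe_sub]
  refine ⟨le_sInf ?_, sInf_coe_image_le_of_forall_lt_mem fun a' ha' => ?_⟩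
  · rintro _ ⟨a', ha', rfl⟩
    exact EReal.coe_le_coe (sub_le_of_dualProfile_eq_one hνM ha')
  · exact dualProfile_eq_one_of_lt (fun a => (hval a).imp_right And.left) hm ha'

theorem stmt10 (ν : ℝ → EReal)
    (hmono : Monotone ν)
    (hrc : ∀ a : ℝ, ContinuousWithinAt ν (Set.Ici a) a)
    (hval : ∀ a : ℝ, ν a = ⊥ ∨ (0 ≤ ν a ∧ ν a ≤ 1))
    (hne : ∃ a : ℝ, ν a ≠ ⊥)
    (hminfin : ∃ m : ℝ, sInf ((fun a : ℝ => (a : EReal)) '' {a : ℝ | 0 ≤ ν a}) = (m : EReal))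
    (hmaxfin : ∃ m : ℝ, sInf ((fun a : ℝ => (a : EReal)) '' {a : ℝ | ν a = 1}) = (m : EReal)) :
    (1 : EReal) - sInf ((fun a : ℝ => (a : EReal)) '' {a : ℝ | ν a = 1}) ≤
        sInf ((fun a : ℝ => (a : EReal)) '' {a' : ℝ | dualProfile ν a' = 1}) ∧
      sInf ((fun a : ℝ => (a : EReal)) '' {a' : ℝ | dualProfile ν a' = 1}) ≤
        (1 : EReal) - sInf ((fun a : ℝ => (a : EReal)) '' {a : ℝ | 0 ≤ ν a}) :=
  stmt10_general ν hmono hrc hval hminfin hmaxfin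
end
end

section
/- Let η : (0,∞) → ℝ be concave. Then the function η' defined for p' > 1 by η'(p') := (p'-1)(1 - η(p'/(p'-1))) + 1 is convex on (1,∞); that is, for p'_1, p'_2 > 1, η'((p'_1+p'_2)/2) ≤ (η'(p'_1)+η'(p'_2))/2. -/
/-!
Writing `t = p' - 1`, we have `p' / (p' - 1) = (t + 1) / t`, so `(p' - 1) η (p' / (p' - 1))` is the
perspective `(x, t) ↦ t η (x / t)` of `η` restricted to the line `x = t + 1`. The perspective of a
concave function is positively homogeneous and superadditive, hence concave, and `η'` is an affine
function minus it.
-/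

open Set

theorem ConcaveOn.perspective_add_le {E : Type*} [AddCommGroup E] [Module ℝ E] {s : Set E}
    {f : E → ℝ} (hf : ConcaveOn ℝ s f) {x₁ x₂ : E} {t₁ t₂ : ℝ} (ht₁ : 0 < t₁) (ht₂ : 0 < t₂)
    (h₁ : t₁⁻¹ • x₁ ∈ s) (h₂ : t₂⁻¹ • x₂ ∈ s) :
    t₁ * f (t₁⁻¹ • x₁) + t₂ * f (t₂⁻¹ • x₂) ≤ (t₁ + t₂) * f ((t₁ + t₂)⁻¹ • (x₁ + x₂)) := by
  have ht : 0 < t₁ + t₂ := add_pos ht₁ ht₂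
  have hweights : t₁ / (t₁ + t₂) + t₂ / (t₁ + t₂) = 1 := by field_simp
  have hmix : (t₁ / (t₁ + t₂)) • t₁⁻¹ • x₁ + (t₂ / (t₁ + t₂)) • t₂⁻¹ • x₂ =
      (t₁ + t₂)⁻¹ • (x₁ + x₂) := by
    have hscale : ∀ t : ℝ, t ≠ 0 → t / (t₁ + t₂) * t⁻¹ = (t₁ + t₂)⁻¹ := fun t ht => by
      field_simp
    rw [smul_smul, smul_smul, hscale t₁ ht₁.ne', hscale t₂ ht₂.ne', smul_add]
  have key := hf.2 h₁ h₂ (div_pos ht₁ ht).le (div_pos ht₂ ht).le hweights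
  rw [hmix, smul_eq_mul, smul_eq_mul] at key
  calc t₁ * f (t₁⁻¹ • x₁) + t₂ * f (t₂⁻¹ • x₂)
      = (t₁ + t₂) * (t₁ / (t₁ + t₂) * f (t₁⁻¹ • x₁) + t₂ / (t₁ + t₂) * f (t₂⁻¹ • x₂)) := by
        field_simp
    _ ≤ (t₁ + t₂) * f ((t₁ + t₂)⁻¹ • (x₁ + x₂)) := mul_le_mul_of_nonneg_left key ht.le

theorem ConcaveOn.concaveOn_sub_one_mul_comp_div_sub_one {η : ℝ → ℝ}
    (hη : ConcaveOn ℝ (Ioi 0) η) :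
    ConcaveOn ℝ (Ioi 1) fun p => (p - 1) * η (p / (p - 1)) := by
  refine concaveOn_iff_forall_pos.2 ⟨convex_Ioi 1, fun a ha b hb μ ν hμ hν hμν => ?_⟩
  have ha' : 0 < a - 1 := sub_pos.2 ha
  have hb' : 0 < b - 1 := sub_pos.2 hb
  have hcancel : ∀ {c x : ℝ}, 0 < c → 0 < x - 1 → (c * (x - 1))⁻¹ • (c * x) = x / (x - 1) :=
    fun hc hx => by rw [smul_eq_mul]; field_simp
  have hsum : μ * (a - 1) + ν * (b - 1) = μ * a + ν * b - 1 := by linear_combination -hμν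
  have key := hη.perspective_add_le (x₁ := μ * a) (x₂ := ν * b) (mul_pos hμ ha') (mul_pos hν hb')
    (by rw [hcancel hμ ha']; exact div_pos (by linarith) ha')
    (by rw [hcancel hν hb']; exact div_pos (by linarith) hb')
  rw [hcancel hμ ha', hcancel hν hb', hsum, smul_eq_mul, ← div_eq_inv_mul] at key
  simp only [smul_eq_mul]
  linarith

theorem ConcaveOn.convexOn_conjugate_transform {η : ℝ → ℝ} (hη : ConcaveOn ℝ (Ioi 0) η) :
    ConvexOn ℝ (Ioi 1) fun p => (p - 1) * (1 - η (p / (p - 1))) + 1 := by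
  have h := (convexOn_id (convex_Ioi (1 : ℝ))).sub hη.concaveOn_sub_one_mul_comp_div_sub_one
  refine h.congr fun p _ => ?_
  simp only [Pi.sub_apply, id_eq]
  ring

theorem stmt12 (η : ℝ → ℝ) (hconc : ConcaveOn ℝ (Set.Ioi (0 : ℝ)) η) :
    ∀ p₁ p₂ : ℝ, 1 < p₁ → 1 < p₂ →
      (fun p' : ℝ => (p' - 1) * (1 - η (p' / (p' - 1))) + 1) ((p₁ + p₂) / 2) ≤
        ((fun p' : ℝ => (p' - 1) * (1 - η (p' / (p' - 1))) + 1) p₁ +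
          (fun p' : ℝ => (p' - 1) * (1 - η (p' / (p' - 1))) + 1) p₂) / 2 := by
  intro p₁ p₂ h₁ h₂
  have h := hconc.convexOn_conjugate_transform.2 h₁ h₂ (by norm_num : (0 : ℝ) ≤ 1 / 2)
    (by norm_num : (0 : ℝ) ≤ 1 / 2) (by norm_num)
  have hmid : (1 / 2 : ℝ) * p₁ + 1 / 2 * p₂ = (p₁ + p₂) / 2 := by ring
  simp only [smul_eq_mul, hmid] at h
  beta_reduce
  linarith
end

section
/- Let ν be an admissible profile and suppose y ∈ Ω is such that for every ε > 0, y ∉ S^{ν'_ε} (where ν'_ε(α') := ν'(α'-ε) and ν' is the dual profile of ν). Then there exists x ∈ S^ν with Σ_{(j,k)∈Λ} x_{j,k} ȳ_{j,k} = +∞ (the partial sums over scales are unbounded); hence the linear form ⟨·, y⟩ is not defined on all of S^ν. -/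
noncomputable section
open Filter Set Topology

/-- `log₂` of the number of coefficients of size `≥ 2^{-βj}` at scale `j`, divided by `j`
(with the convention `log₂ 0 = -∞`). -/
def logCount (x : ∀ j : ℕ, Fin (2 ^ j) → ℂ) (β : ℝ) (j : ℕ) : EReal :=
  if ({k : Fin (2 ^ j) | (2 : ℝ) ^ (-(β * (j : ℝ))) ≤ ‖x j k‖}.ncard) = 0 then ⊥
  else ((Real.logb 2
    ({k : Fin (2 ^ j) | (2 : ℝ) ^ (-(β * (j : ℝ))) ≤ ‖x j k‖}.ncard) / (j : ℝ)
      : ℝ) : EReal)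

/-- The asymptotic profile `ν_x` of a hierarchical sequence: the limit as `ε → 0⁺`
(i.e. the infimum over `ε > 0`, by monotonicity) of
`limsup_j (1/j) log₂ card{k : |x_{j,k}| ≥ 2^{-(α+ε)j}}`. -/
def asymProfile (x : ∀ j : ℕ, Fin (2 ^ j) → ℂ) (α : ℝ) : EReal :=
  sInf {L : EReal | ∃ ε : ℝ, 0 < ε ∧ L = Filter.limsup (logCount x (α + ε)) Filter.atTop}

/-!
Unwinding the dual profile, the hypothesis on `y` gives for every `ε > 0` reals `p, q` with
`p + q - ε < ν q` and `p + q - ε < ν_y p`. Unless the `p` of one such pair and the `q` of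
another already satisfy `p + q ≤ 0`, these pairs stay in a compact set, and by right-continuity
of `ν` and `ν_y` a limit pair satisfies `p + q ≤ ν q` and `p + q ≤ ν_y p`. This yields `B` and
`c ≥ 0` with `c ≤ ν B` and `c ≤ ν_y (c - B)`.

Then at infinitely many scales `j`, with `ε → 0` along them, `y` has at least `2 ^ ((c - ε) j)`
coefficients of modulus `≥ 2 ^ (-(c - B + ε) j)`. At those scales only, `x` takes about
`2 ^ ((c - ε) j)` of these positions, with modulus `2 ^ (-(B - 2ε) j)` and the phase of `y`.
Each such scale contributes at least `1` to `Σ x ȳ`, while `ν_x ≤ c ≤ ν` on `[B, ∞)` and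
`ν_x = -∞` below `B`.
-/

def largeCoeffs (x : ∀ j : ℕ, Fin (2 ^ j) → ℂ) (β : ℝ) (j : ℕ) : Set (Fin (2 ^ j)) :=
  {k | (2 : ℝ) ^ (-(β * (j : ℝ))) ≤ ‖x j k‖}

section logCount

variable {x : ∀ j : ℕ, Fin (2 ^ j) → ℂ} {β : ℝ} {j : ℕ}

lemma logCount_of_ncard_eq_zero (h : (largeCoeffs x β j).ncard = 0) : logCount x β j = ⊥ :=
  if_pos h

lemma logCount_of_ncard_ne_zero (h : (largeCoeffs x β j).ncard ≠ 0) :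
    logCount x β j = ((Real.logb 2 (largeCoeffs x β j).ncard / j : ℝ) : EReal) :=
  if_neg h

lemma logCount_le_of_ncard_le {t : ℝ} (hj : 0 < j)
    (h : ((largeCoeffs x β j).ncard : ℝ) ≤ 2 ^ t) : logCount x β j ≤ ((t / j : ℝ) : EReal) := by
  by_cases h0 : (largeCoeffs x β j).ncard = 0
  · simp [logCount_of_ncard_eq_zero h0]
  rw [logCount_of_ncard_ne_zero h0, EReal.coe_le_coe_iff]
  gcongr
  exact (Real.logb_le_iff_le_rpow one_lt_two (by positivity)).mpr h

lemma rpow_lt_ncard_of_lt_logCount {a : ℝ} (hj : 0 < j) (h : (a : EReal) < logCount x β j) :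
    (2 : ℝ) ^ (a * j) < (largeCoeffs x β j).ncard := by
  have h0 : (largeCoeffs x β j).ncard ≠ 0 := fun h0 => by
    simp [logCount_of_ncard_eq_zero h0] at h
  rw [logCount_of_ncard_ne_zero h0, EReal.coe_lt_coe_iff, lt_div_iff₀ (by positivity)] at h
  exact (Real.lt_logb_iff_rpow_lt one_lt_two (by positivity)).mp h

lemma logCount_eq_bot_of_neg (h : logCount x β j < 0) : logCount x β j = ⊥ := by
  by_contra hne
  have h0 : (largeCoeffs x β j).ncard ≠ 0 := fun h0 => hne (logCount_of_ncard_eq_zero h0)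
  rw [logCount_of_ncard_ne_zero h0, ← EReal.coe_zero, EReal.coe_lt_coe_iff] at h
  have hn : (1 : ℝ) ≤ (largeCoeffs x β j).ncard := by exact_mod_cast Nat.one_le_iff_ne_zero.mpr h0
  exact h.not_ge (div_nonneg (Real.logb_nonneg one_lt_two hn) j.cast_nonneg)

lemma logCount_le_one (hj : 0 < j) : logCount x β j ≤ 1 := by
  have h : ((largeCoeffs x β j).ncard : ℝ) ≤ 2 ^ (j : ℝ) := by
    rw [Real.rpow_natCast]
    exact_mod_cast (Set.ncard_le_card _).trans_eq (Nat.card_fin _)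
  simpa [div_self (Nat.cast_ne_zero.mpr hj.ne' : (j : ℝ) ≠ 0)] using logCount_le_of_ncard_le hj h

lemma limsup_logCount_le {c : ℝ} (hc : 0 ≤ c)
    (h : ∀ j, ((largeCoeffs x β j).ncard : ℝ) ≤ 2 ^ (c * j) + 1) :
    limsup (logCount x β) atTop ≤ c := by
  have hlim : Tendsto (fun j : ℕ => ((c + 1 / j : ℝ) : EReal)) atTop (𝓝 (c : EReal)) :=
    EReal.tendsto_coe.mpr (by simpa using tendsto_one_div_atTop_nhds_zero_nat.const_add c)
  rw [← hlim.limsup_eq]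
  refine limsup_le_limsup ?_
  filter_upwards [eventually_gt_atTop 0] with j hj
  have hle : ((largeCoeffs x β j).ncard : ℝ) ≤ 2 ^ (c * j + 1) := by
    have : (1 : ℝ) ≤ 2 ^ (c * j) := Real.one_le_rpow one_le_two (by positivity)
    rw [Real.rpow_add_one two_ne_zero]
    linarith [h j]
  refine (logCount_le_of_ncard_le hj hle).trans_eq ?_
  rw [add_div, mul_div_cancel_right₀ _ (Nat.cast_ne_zero.mpr hj.ne')]

end logCount

section asymProfile

variable (x : ∀ j : ℕ, Fin (2 ^ j) → ℂ)

lemma asymProfile_le_limsup {ε : ℝ} (α : ℝ) (hε : 0 < ε) :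
    asymProfile x α ≤ limsup (logCount x (α + ε)) atTop :=
  sInf_le ⟨ε, hε, rfl⟩

lemma asymProfile_mono : Monotone (asymProfile x) := by
  intro a b hab
  refine le_sInf ?_
  rintro L ⟨ε, hε, rfl⟩
  have h := asymProfile_le_limsup x a (ε := b - a + ε) (by linarith)
  rwa [← add_assoc, add_sub_cancel] at h

lemma asymProfile_le_one (α : ℝ) : asymProfile x α ≤ 1 :=
  (asymProfile_le_limsup x α one_pos).trans <|
    limsup_le_of_le (by isBoundedDefault) ((eventually_gt_atTop 0).mono fun _ => logCount_le_one)

lemma asymProfile_nonneg {α : ℝ} (h : asymProfile x α ≠ ⊥) : 0 ≤ asymProfile x α := by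
  by_contra hneg
  obtain ⟨L, ⟨ε, hε, rfl⟩, hL⟩ := sInf_lt_iff.mp (not_le.mp hneg)
  refine h (le_bot_iff.mp ((asymProfile_le_limsup x α hε).trans ?_))
  refine limsup_le_of_le (by isBoundedDefault) ?_
  filter_upwards [eventually_lt_of_limsup_lt hL] with j hj
  exact (logCount_eq_bot_of_neg hj).le

lemma asymProfile_continuousWithinAt_Ici (α : ℝ) :
    ContinuousWithinAt (asymProfile x) (Ici α) α := by
  rw [← continuousWithinAt_Ioi_iff_Ici, ContinuousWithinAt]
  convert (asymProfile_mono x).tendsto_nhdsGT α using 2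
  refine le_antisymm (le_sInf ?_) (le_sInf ?_)
  · rintro _ ⟨b, hb, rfl⟩
    exact asymProfile_mono x (le_of_lt hb)
  · rintro L ⟨ε, hε, rfl⟩
    have h := asymProfile_le_limsup x (α + ε / 2) (half_pos hε)
    rw [add_assoc, add_halves] at h
    exact (sInf_le (mem_image_of_mem _ (by simpa using half_pos hε))).trans h

end asymProfile

lemma lt_of_clamp_lt {z t : EReal} (h0 : 0 ≤ t) (h1 : t ≤ 1) (h : clamp z < t) : z < t := by
  unfold clamp at h
  split_ifs at h with hz
  · exact hz.trans_le h0
  · rcases le_total z 1 with hz1 | hz1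
    · rwa [min_eq_left hz1] at h
    · rw [min_eq_right hz1] at h
      exact absurd (h.trans_le h1) (lt_irrefl 1)

lemma exists_add_lt_of_add_sInf_lt {A : Set ℝ} {a F : ℝ}
    (h : (a : EReal) + sInf ((fun q : ℝ => (q : EReal)) '' A) < F) : ∃ q ∈ A, a + q < F := by
  by_contra! hA
  refine h.not_ge ?_
  have hle : ((F - a : ℝ) : EReal) ≤ sInf ((fun q : ℝ => (q : EReal)) '' A) := by
    refine le_sInf ?_
    rintro _ ⟨q, hq, rfl⟩
    exact EReal.coe_le_coe_iff.mpr (by linarith [hA q hq])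
  calc (F : EReal) = (a : EReal) + ((F - a : ℝ) : EReal) := by rw [← EReal.coe_add]; ring_nf
    _ ≤ _ := by gcongr

lemma exists_lt_of_dualProfile_lt {ν : ℝ → EReal} {a : ℝ} {t : EReal} (h0 : 0 ≤ t) (h1 : t ≤ 1)
    (h : dualProfile ν a < t) :
    ∃ q : ℝ, ((a + q : ℝ) : EReal) < ν q ∧ ((a + q : ℝ) : EReal) < t := by
  induction t using EReal.rec with
  | bot => exact absurd h0 (by simp)
  | top => exact absurd (top_le_iff.mp h1) (by simpa using EReal.coe_ne_top 1)
  | coe F =>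
    obtain ⟨q, hq, hlt⟩ := exists_add_lt_of_add_sInf_lt (lt_of_clamp_lt h0 h1 h)
    refine ⟨q, ?_, EReal.coe_lt_coe_iff.mpr hlt⟩
    rw [EReal.coe_add]
    exact (EReal.lt_sub_iff_add_lt (.inl (EReal.coe_ne_bot q)) (.inl (EReal.coe_ne_top q))).mp hq

lemma Monotone.le_apply_of_tendsto {β : Type*} [LinearOrder β] [TopologicalSpace β]
    [OrderClosedTopology β] {g : ℝ → β} (hg : Monotone g) {a : ℝ}
    (hrc : ContinuousWithinAt g (Ici a) a) {q : ℕ → ℝ} (hq : Tendsto q atTop (𝓝 a))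
    {r : ℕ → β} {L : β} (hr : Tendsto r atTop (𝓝 L)) (h : ∀ n, r n ≤ g (q n)) : L ≤ g a := by
  have hright : ∀ b, a < b → L ≤ g b := fun b hb =>
    _root_.le_of_tendsto hr ((hq.eventually_lt_const hb).mono fun n hn => (h n).trans (hg hn.le))
  exact _root_.ge_of_tendsto (hrc.mono_left (nhdsWithin_mono _ Ioi_subset_Ici_self))
    (eventually_nhdsWithin_of_forall hright)

section profiles

variable {ν : ℝ → EReal} (y : ∀ j : ℕ, Fin (2 ^ j) → ℂ)

lemma exists_approx_profile_pair
    (hy : ∀ ε : ℝ, 0 < ε → ¬ (∀ α : ℝ, asymProfile y α ≤ dualProfile ν (α - ε)))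
    {ε : ℝ} (hε : 0 < ε) :
    ∃ p q : ℝ, ((p + q - ε : ℝ) : EReal) < ν q ∧ ((p + q - ε : ℝ) : EReal) < asymProfile y p := by
  obtain ⟨p, hp⟩ := not_forall.mp (hy ε hε)
  have hp' : dualProfile ν (p - ε) < asymProfile y p := not_le.mp hp
  obtain ⟨q, hqν, hqy⟩ := exists_lt_of_dualProfile_lt
    (asymProfile_nonneg y (ne_bot_of_gt hp')) (asymProfile_le_one y p) hp'
  exact ⟨p, q, by convert hqν using 3; ring, by convert hqy using 3; ring⟩

lemma exists_profile_pair (hmono : Monotone ν)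
    (hrc : ∀ a : ℝ, ContinuousWithinAt ν (Set.Ici a) a) (hν0 : ∀ a, ν a ≠ ⊥ → 0 ≤ ν a)
    (hy : ∀ ε : ℝ, 0 < ε → ¬ (∀ α : ℝ, asymProfile y α ≤ dualProfile ν (α - ε))) :
    ∃ p q : ℝ, ((p + q : ℝ) : EReal) ≤ ν q ∧ ((p + q : ℝ) : EReal) ≤ asymProfile y p := by
  choose P Q hQ hP using fun n : ℕ =>
    exists_approx_profile_pair y hy (Nat.one_div_pos_of_nat (n := n))
  have hνQ (n : ℕ) : 0 ≤ ν (Q n) := hν0 _ (ne_bot_of_gt (hQ n))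
  have hyP (n : ℕ) : 0 ≤ asymProfile y (P n) := asymProfile_nonneg y (ne_bot_of_gt (hP n))
  by_cases hneg : ∃ n m, P m + Q n ≤ 0
  · obtain ⟨n, m, h⟩ := hneg
    have h' : ((P m + Q n : ℝ) : EReal) ≤ 0 := EReal.coe_nonpos.mpr h
    exact ⟨P m, Q n, h'.trans (hνQ n), h'.trans (hyP m)⟩
  push Not at hneg
  have hsum (n : ℕ) : P n + Q n < 2 := by
    have h := EReal.coe_lt_coe_iff.mp ((hP n).trans_le (asymProfile_le_one y (P n)))
    have : 1 / ((n : ℝ) + 1) ≤ 1 := by rw [div_le_one (by positivity)]; simp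
    linarith
  have hbdd (n : ℕ) : (P n, Q n) ∈ Icc (-Q 0, -P 0) (2 + P 0, 2 + Q 0) := by
    have := hneg 0 n; have := hneg n 0; have := hsum n
    exact ⟨⟨by linarith, by linarith⟩, ⟨by linarith, by linarith⟩⟩
  obtain ⟨⟨p, q⟩, -, ψ, hψ, hlim⟩ := tendsto_subseq_of_bounded (Metric.isBounded_Icc _ _) hbdd
  have hε : Tendsto (fun n => 1 / ((ψ n : ℝ) + 1)) atTop (𝓝 0) :=
    tendsto_one_div_add_atTop_nhds_zero_nat.comp hψ.tendsto_atTop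
  have hr : Tendsto (fun n => ((P (ψ n) + Q (ψ n) - 1 / ((ψ n : ℝ) + 1) : ℝ) : EReal)) atTop
      (𝓝 ((p + q : ℝ) : EReal)) :=
    EReal.tendsto_coe.mpr (by simpa using (hlim.fst_nhds.add hlim.snd_nhds).sub hε)
  exact ⟨p, q, hmono.le_apply_of_tendsto (hrc q) hlim.snd_nhds hr fun n => (hQ _).le,
    (asymProfile_mono y).le_apply_of_tendsto (asymProfile_continuousWithinAt_Ici y p)
      hlim.fst_nhds hr fun n => (hP _).le⟩

lemma exists_budget_of_profile_pair (hmono : Monotone ν) (hν0 : ∀ a, ν a ≠ ⊥ → 0 ≤ ν a)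
    {p q : ℝ} (hq : ((p + q : ℝ) : EReal) ≤ ν q) (hp : ((p + q : ℝ) : EReal) ≤ asymProfile y p) :
    ∃ B c : ℝ, 0 ≤ c ∧ (c : EReal) ≤ ν B ∧ (c : EReal) ≤ asymProfile y (c - B) := by
  rcases le_or_gt 0 (p + q) with h | h
  · exact ⟨q, p + q, h, hq, by rwa [add_sub_cancel_right]⟩
  · refine ⟨-p, 0, le_rfl, ?_, ?_⟩
    · exact (hν0 q (ne_bot_of_le_ne_bot (EReal.coe_ne_bot _) hq)).trans (hmono (by linarith))
    · simpa using asymProfile_nonneg y (ne_bot_of_le_ne_bot (EReal.coe_ne_bot _) hp)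

end profiles

lemma not_bddAbove_range_sum_of_frequently_one_le {f : ℕ → ℝ} (hf : ∀ n, 0 ≤ f n)
    (h : ∃ᶠ n in atTop, 1 ≤ f n) : ¬ BddAbove (range fun N => ∑ i ∈ Finset.range N, f i) := by
  rintro ⟨C, hC⟩
  have hf0 := (summable_of_sum_range_le hf fun n => hC ⟨n, rfl⟩).tendsto_atTop_zero
  obtain ⟨n, h1, h2⟩ := (h.and_eventually (hf0.eventually (gt_mem_nhds one_pos))).exists
  exact h1.not_gt h2

lemma exists_finset_subset_card_between {α : Type*} [Fintype α] {s : Set α} {r : ℝ} (hr0 : 0 ≤ r)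
    (hr : r ≤ s.ncard) : ∃ t : Finset α, ↑t ⊆ s ∧ r ≤ t.card ∧ (t.card : ℝ) ≤ r + 1 := by
  classical
  have hcard : ⌈r⌉₊ ≤ s.toFinset.card := by
    rw [← Set.ncard_eq_toFinset_card']
    exact Nat.ceil_le.mpr hr
  obtain ⟨t, hts, htcard⟩ := Finset.exists_subset_card_eq hcard
  refine ⟨t, fun k hk => Set.mem_toFinset.mp (hts hk), ?_, ?_⟩ <;> rw [htcard]
  · exact Nat.le_ceil r
  · exact (Nat.ceil_lt_add_one hr0).le

def alignedSeq (y : ∀ j : ℕ, Fin (2 ^ j) → ℂ) (T : ∀ j : ℕ, Finset (Fin (2 ^ j))) (b : ℕ → ℝ) :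
    ∀ j : ℕ, Fin (2 ^ j) → ℂ := fun j k =>
  if k ∈ T j then (((2 : ℝ) ^ (-(b j * j)) : ℝ) : ℂ) * (y j k / (‖y j k‖ : ℂ)) else 0

section alignedSeq

variable (y : ∀ j : ℕ, Fin (2 ^ j) → ℂ) {T : ∀ j : ℕ, Finset (Fin (2 ^ j))} {b : ℕ → ℝ}

lemma norm_alignedSeq_le (j : ℕ) (k : Fin (2 ^ j)) :
    ‖alignedSeq y T b j k‖ ≤ if k ∈ T j then (2 : ℝ) ^ (-(b j * j)) else 0 := by
  unfold alignedSeq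
  split_ifs
  · rw [norm_mul, Complex.norm_real, Real.norm_of_nonneg (by positivity), norm_div,
      Complex.norm_real, norm_norm]
    exact mul_le_of_le_one_right (by positivity) (div_self_le_one _)
  · simp

lemma re_alignedSeq_mul_conj (j : ℕ) (k : Fin (2 ^ j)) :
    (alignedSeq y T b j k * (starRingEnd ℂ) (y j k)).re =
      if k ∈ T j then (2 : ℝ) ^ (-(b j * j)) * ‖y j k‖ else 0 := by
  unfold alignedSeq
  split_ifs
  · have hsq : ‖y j k‖ ^ 2 / ‖y j k‖ = ‖y j k‖ := by
      rcases eq_or_ne ‖y j k‖ 0 with h | h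
      · simp [h]
      · field_simp
    rw [mul_assoc, div_mul_eq_mul_div, Complex.mul_conj', ← Complex.ofReal_pow,
      ← Complex.ofReal_div, ← Complex.ofReal_mul, Complex.ofReal_re, hsq]
  · simp

lemma re_alignedSeq_mul_conj_nonneg (j : ℕ) (k : Fin (2 ^ j)) :
    0 ≤ (alignedSeq y T b j k * (starRingEnd ℂ) (y j k)).re := by
  rw [re_alignedSeq_mul_conj]
  split_ifs <;> positivity

lemma card_mul_le_sum_re_alignedSeq_mul_conj {a : ℝ} {j : ℕ} (hT : ↑(T j) ⊆ largeCoeffs y a j) :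
    (T j).card * ((2 : ℝ) ^ (-(b j * j)) * 2 ^ (-(a * j))) ≤
      ∑ k, (alignedSeq y T b j k * (starRingEnd ℂ) (y j k)).re := by
  calc (T j).card * ((2 : ℝ) ^ (-(b j * j)) * 2 ^ (-(a * j)))
      = ∑ k ∈ T j, (2 : ℝ) ^ (-(b j * j)) * 2 ^ (-(a * j)) := by simp
    _ ≤ ∑ k ∈ T j, (alignedSeq y T b j k * (starRingEnd ℂ) (y j k)).re := by
      refine Finset.sum_le_sum fun k hk => ?_
      rw [re_alignedSeq_mul_conj, if_pos hk]
      exact mul_le_mul_of_nonneg_left (hT hk) (by positivity)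
    _ ≤ _ := Finset.sum_le_sum_of_subset_of_nonneg (Finset.subset_univ _)
      fun k _ _ => re_alignedSeq_mul_conj_nonneg y j k

lemma largeCoeffs_alignedSeq_subset (β : ℝ) (j : ℕ) :
    largeCoeffs (alignedSeq y T b) β j ⊆ T j := by
  intro k hk
  by_contra hkT
  have h := norm_alignedSeq_le y (T := T) (b := b) j k
  rw [if_neg (Finset.mem_coe.not.mp hkT)] at h
  exact (lt_of_lt_of_le (by positivity) hk).not_ge h

lemma largeCoeffs_alignedSeq_eq_empty {β : ℝ} {j : ℕ} (hj : 0 < j) (hβ : β < b j) :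
    largeCoeffs (alignedSeq y T b) β j = ∅ := by
  refine eq_empty_of_forall_notMem fun k hk => ?_
  have h := norm_alignedSeq_le y (T := T) (b := b) j k
  have hlt : (2 : ℝ) ^ (-(b j * j)) < 2 ^ (-(β * j)) :=
    Real.rpow_lt_rpow_of_exponent_lt one_lt_two (by nlinarith [(Nat.cast_pos.mpr hj : (0 : ℝ) < j)])
  split_ifs at h
  · exact (hk.trans h).not_gt hlt
  · exact (lt_of_lt_of_le (by positivity) hk).not_ge h

lemma asymProfile_alignedSeq_le {c : ℝ} (hc : 0 ≤ c) (hT : ∀ j, ((T j).card : ℝ) ≤ 2 ^ (c * j) + 1)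
    (α : ℝ) : asymProfile (alignedSeq y T b) α ≤ c := by
  refine (asymProfile_le_limsup _ α one_pos).trans (limsup_logCount_le hc fun j => ?_)
  refine le_trans ?_ (hT j)
  rw [← Set.ncard_coe_finset]
  exact_mod_cast Set.ncard_le_ncard (largeCoeffs_alignedSeq_subset y _ j) (Finset.finite_toSet _)

lemma asymProfile_alignedSeq_eq_bot {α δ : ℝ} (hδ : 0 < δ)
    (hb : ∀ᶠ j in atTop, (T j).Nonempty → α + δ < b j) :
    asymProfile (alignedSeq y T b) α = ⊥ := by
  refine le_bot_iff.mp ((asymProfile_le_limsup _ α hδ).trans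
    (limsup_le_of_le (by isBoundedDefault) ?_))
  filter_upwards [hb, eventually_gt_atTop 0] with j hbj hj
  refine (logCount_of_ncard_eq_zero ?_).le
  rcases (T j).eq_empty_or_nonempty with h | h
  · have := largeCoeffs_alignedSeq_subset y (T := T) (b := b) (α + δ) j
    rw [h, Finset.coe_empty, subset_empty_iff] at this
    rw [this, Set.ncard_empty]
  · rw [largeCoeffs_alignedSeq_eq_empty y hj (hbj h), Set.ncard_empty]

end alignedSeq

section construction

variable (y : ∀ j : ℕ, Fin (2 ^ j) → ℂ)

lemma exists_scales {c α : ℝ} (h : (c : EReal) ≤ asymProfile y α) :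
    ∃ G : Set ℕ, G.Infinite ∧ ∃ e : ℕ → ℝ, (∀ j, 0 ≤ e j) ∧ Tendsto e (atTop ⊓ 𝓟 G) (𝓝 0) ∧
      ∀ j ∈ G, (2 : ℝ) ^ ((c - e j) * j) ≤ (largeCoeffs y (α + e j) j).ncard := by
  have hfreq (n : ℕ) : ∃ᶠ j : ℕ in atTop,
      (2 : ℝ) ^ ((c - 1 / (n + 1)) * j) ≤ (largeCoeffs y (α + 1 / (n + 1)) j).ncard := by
    have hε : (0 : ℝ) < 1 / (n + 1) := Nat.one_div_pos_of_nat
    have hlt : ((c - 1 / (n + 1) : ℝ) : EReal) < limsup (logCount y (α + 1 / (n + 1))) atTop :=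
      (EReal.coe_lt_coe_iff.mpr (by linarith)).trans_le (h.trans (asymProfile_le_limsup y α hε))
    exact ((frequently_lt_of_lt_limsup (by isBoundedDefault) hlt).and_eventually
      (eventually_gt_atTop 0)).mono fun j hj => (rpow_lt_ncard_of_lt_logCount hj.2 hj.1).le
  obtain ⟨J, hJ, hJcount⟩ := extraction_forall_of_frequently hfreq
  have hinv : Function.LeftInverse (Function.invFun J) J := Function.leftInverse_invFun hJ.injective
  refine ⟨range J, infinite_range_of_injective hJ.injective,
    fun j => 1 / (Function.invFun J j + 1), fun j => by positivity, ?_, ?_⟩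
  · refine tendsto_one_div_add_atTop_nhds_zero_nat.comp (tendsto_atTop.mpr fun N => ?_)
    rw [eventually_inf_principal]
    filter_upwards [eventually_ge_atTop (J N)]
    rintro _ hj ⟨n, rfl⟩
    rw [hinv n]
    exact hJ.le_iff_le.mp hj
  · rintro _ ⟨n, rfl⟩
    simpa only [hinv n] using hJcount n

lemma exists_unbounded_pairing {B c : ℝ} (hc : 0 ≤ c) {G : Set ℕ} (hG : G.Infinite)
    {e : ℕ → ℝ} (he0 : ∀ j, 0 ≤ e j) (he : Tendsto e (atTop ⊓ 𝓟 G) (𝓝 0))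
    (hcount : ∀ j ∈ G, (2 : ℝ) ^ ((c - e j) * j) ≤ (largeCoeffs y (c - B + e j) j).ncard) :
    ∃ x : ∀ j : ℕ, Fin (2 ^ j) → ℂ,
      (∀ α, asymProfile x α ≤ c) ∧ (∀ α < B, asymProfile x α = ⊥) ∧
      ¬ BddAbove (Set.range fun J : ℕ =>
        ∑ j ∈ Finset.range J, ∑ k : Fin (2 ^ j), (x j k * (starRingEnd ℂ) (y j k)).re) := by
  have hT (j : ℕ) : ∃ t : Finset (Fin (2 ^ j)), ↑t ⊆ largeCoeffs y (c - B + e j) j ∧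
      (t.card : ℝ) ≤ 2 ^ (c * j) + 1 ∧ (t.Nonempty → j ∈ G) ∧
      (j ∈ G → (2 : ℝ) ^ ((c - e j) * j) ≤ t.card) := by
    by_cases hj : j ∈ G
    · obtain ⟨t, hts, hlow, hup⟩ := exists_finset_subset_card_between (by positivity) (hcount j hj)
      have hpow : (2 : ℝ) ^ ((c - e j) * j) ≤ 2 ^ (c * j) :=
        Real.rpow_le_rpow_of_exponent_le one_le_two (by nlinarith [he0 j, j.cast_nonneg (α := ℝ)])
      exact ⟨t, hts, by linarith, fun _ => hj, fun _ => hlow⟩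
    · refine ⟨∅, by simp, ?_, by simp, fun h => absurd h hj⟩
      simp only [Finset.card_empty, Nat.cast_zero]
      positivity
  choose T hTs hTcard hTG hTlow using hT
  refine ⟨alignedSeq y T (fun j => B - 2 * e j), asymProfile_alignedSeq_le y hc hTcard,
    fun α hα => ?_, ?_⟩
  · have hδ : 0 < (B - α) / 3 := by linarith
    refine asymProfile_alignedSeq_eq_bot y hδ ?_
    filter_upwards [eventually_inf_principal.mp (he.eventually (gt_mem_nhds hδ))] with j hj hTj
    linarith [hj (hTG j hTj)]
  · refine not_bddAbove_range_sum_of_frequently_one_le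
      (fun j => Finset.sum_nonneg fun k _ => re_alignedSeq_mul_conj_nonneg y j k) ?_
    refine (Nat.frequently_atTop_iff_infinite.mpr hG).mono fun j hj => ?_
    refine le_trans ?_ (card_mul_le_sum_re_alignedSeq_mul_conj y (hTs j))
    rw [← Real.rpow_add two_pos, show -((B - 2 * e j) * j) + -((c - B + e j) * j) =
      -((c - e j) * j) by ring, Real.rpow_neg (by positivity), ← div_eq_mul_inv,
      one_le_div (by positivity)]
    exact hTlow j hj

end construction

theorem stmt18_general (ν : ℝ → EReal)
    (hmono : Monotone ν)
    (hrc : ∀ a : ℝ, ContinuousWithinAt ν (Set.Ici a) a)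
    (hval : ∀ a : ℝ, ν a = ⊥ ∨ (0 ≤ ν a ∧ ν a ≤ 1))
    (y : ∀ j : ℕ, Fin (2 ^ j) → ℂ)
    (hy : ∀ ε : ℝ, 0 < ε → ¬ (∀ α : ℝ, asymProfile y α ≤ dualProfile ν (α - ε))) :
    ∃ x : ∀ j : ℕ, Fin (2 ^ j) → ℂ,
      (∀ α : ℝ, asymProfile x α ≤ ν α) ∧
      ¬ BddAbove (Set.range fun J : ℕ =>
        ∑ j ∈ Finset.range J, ∑ k : Fin (2 ^ j),
          (x j k * (starRingEnd ℂ) (y j k)).re) := by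
  have hν0 (a : ℝ) (ha : ν a ≠ ⊥) : 0 ≤ ν a := ((hval a).resolve_left ha).1
  obtain ⟨p, q, hq, hp⟩ := exists_profile_pair y hmono hrc hν0 hy
  obtain ⟨B, c, hc, hνB, hyB⟩ := exists_budget_of_profile_pair y hmono hν0 hq hp
  obtain ⟨G, hG, e, he0, he, hcount⟩ := exists_scales y hyB
  obtain ⟨x, hxc, hxB, hunbdd⟩ := exists_unbounded_pairing y hc hG he0 he hcount
  refine ⟨x, fun α => ?_, hunbdd⟩
  rcases lt_or_ge α B with hα | hα
  · rw [hxB α hα]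
    exact bot_le
  · exact (hxc α).trans (hνB.trans (hmono hα))

theorem stmt18 (ν : ℝ → EReal)
    (hmono : Monotone ν)
    (hrc : ∀ a : ℝ, ContinuousWithinAt ν (Set.Ici a) a)
    (hval : ∀ a : ℝ, ν a = ⊥ ∨ (0 ≤ ν a ∧ ν a ≤ 1))
    (hne : ∃ a : ℝ, ν a ≠ ⊥)
    (y : ∀ j : ℕ, Fin (2 ^ j) → ℂ)
    (hy : ∀ ε : ℝ, 0 < ε → ¬ (∀ α : ℝ, asymProfile y α ≤ dualProfile ν (α - ε))) :
    ∃ x : ∀ j : ℕ, Fin (2 ^ j) → ℂ,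
      (∀ α : ℝ, asymProfile x α ≤ ν α) ∧
      ¬ BddAbove (Set.range fun J : ℕ =>
        ∑ j ∈ Finset.range J, ∑ k : Fin (2 ^ j),
          (x j k * (starRingEnd ℂ) (y j k)).re) :=
  stmt18_general ν hmono hrc hval y hy
end
end

section
/- Let ν be an admissible profile whose support interval [α_min, α_max) is nonempty, and suppose the convexity index p₀ := min(1, inf{D⁺ν(α) : α_min ≤ α < α_max}) satisfies p₀ < p ≤ 1. Then there exist ε > 0 and α_min ≤ α < α' < α_max with ν(α') + ε < 1 and ν(α') - ν(α) + ε < p(α' - α), and moreover ε and s := α' - α can be chosen so that (p/(p+1))(s + ν(α') - ν(α) + ε) < 1 - ν(α). -/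
noncomputable section
open Filter Set Topology

/-- Right-inf derivative of an extended-real-valued profile. -/
def rightInfDeriv (ν : ℝ → EReal) (a : ℝ) : EReal :=
  Filter.liminf (fun h : ℝ => ((((ν (a + h)).toReal - (ν a).toReal) / h : ℝ) : EReal))
    (nhdsWithin 0 (Set.Ioi 0))

/-- `α_min = inf{α : ν(α) ≥ 0}` as an extended real. -/
def alphaMin (ν : ℝ → EReal) : EReal :=
  sInf ((fun a : ℝ => (a : EReal)) '' {a : ℝ | 0 ≤ ν a})

/-- `α_max = inf{α : ν(α) = 1}` as an extended real (`inf ∅ = +∞`). -/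
def alphaMax (ν : ℝ → EReal) : EReal :=
  sInf ((fun a : ℝ => (a : EReal)) '' {a : ℝ | ν a = 1})

/-- The convexity index `p₀ = min(1, inf{D⁺ν(α) : α_min ≤ α < α_max})`. -/
def convIndex (ν : ℝ → EReal) : EReal :=
  min 1 (sInf {d : EReal | ∃ a : ℝ, alphaMin ν ≤ (a : EReal) ∧ (a : EReal) < alphaMax ν ∧
    d = rightInfDeriv ν a})

/-!
Since `p₀ < p ≤ 1`, some `a` in the support interval has `D⁺ν(a) < p`, so there are arbitrarily
small `h > 0` with `ν(a + h) - ν(a) < p h`. Take `h < 1 - ν(a)` and `a + h < α_max`; then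
`ν(a + h) < 1`, and a small enough `ε > 0` keeps both strict inequalities. The last one holds
because `p/(p+1) · (h + p h) = p h ≤ h < 1 - ν(a)`.
-/

lemma EReal.toReal_lt_one {x : EReal} (hx : x < 1) : x.toReal < 1 := by
  induction x using EReal.rec with
  | bot => simp
  | top => exact absurd hx (not_lt.2 le_top)
  | coe r => exact_mod_cast hx

lemma exists_pos_slack {p h t t' : ℝ} (hp1 : p ≤ 1) (hh : 0 < h) (htt' : t ≤ t')
    (hslope : t' - t < p * h) (ht' : t' < 1) (hht : h < 1 - t) :
    ∃ ε : ℝ, 0 < ε ∧ t' + ε < 1 ∧ t' - t + ε < p * h ∧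
      p / (p + 1) * (h + (t' - t + ε)) < 1 - t := by
  have hp0 : 0 < p := pos_of_mul_pos_left (by linarith) hh.le
  refine ⟨min (p * h - (t' - t)) (1 - t') / 2, by positivity, ?_, ?_, ?_⟩
  · linarith [min_le_right (p * h - (t' - t)) (1 - t')]
  · linarith [min_le_left (p * h - (t' - t)) (1 - t')]
  calc p / (p + 1) * (h + (t' - t + min (p * h - (t' - t)) (1 - t') / 2))
      < p / (p + 1) * (h + p * h) := by
        gcongr
        linarith [min_le_left (p * h - (t' - t)) (1 - t')]
    _ = p * h := by field_simp; ring
    _ ≤ h := by nlinarith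
    _ < 1 - t := hht

section Profile

variable {ν : ℝ → EReal}

lemma toReal_nonneg_of_profile (hval : ∀ a, ν a = ⊥ ∨ (0 ≤ ν a ∧ ν a ≤ 1)) (x : ℝ) :
    0 ≤ (ν x).toReal := by
  rcases hval x with hx | ⟨hx, -⟩
  · simp [hx]
  · exact EReal.toReal_nonneg hx

lemma monotone_toReal_of_profile (hmono : Monotone ν)
    (hval : ∀ a, ν a = ⊥ ∨ (0 ≤ ν a ∧ ν a ≤ 1)) : Monotone fun a ↦ (ν a).toReal := by
  intro x y hxy
  have hy : ν y ≠ ⊤ := by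
    rcases hval y with hy | ⟨-, hy⟩
    · simp [hy]
    · exact ne_top_of_le_ne_top (EReal.coe_ne_top 1) hy
  rcases hval x with hx | ⟨hx, -⟩
  · simpa [hx] using toReal_nonneg_of_profile hval y
  · exact EReal.toReal_le_toReal (hmono hxy) (ne_bot_of_le_ne_bot EReal.zero_ne_bot hx) hy

lemma toReal_lt_one_of_lt_alphaMax (hval : ∀ a, ν a = ⊥ ∨ (0 ≤ ν a ∧ ν a ≤ 1)) {x : ℝ}
    (hx : (x : EReal) < alphaMax ν) : (ν x).toReal < 1 := by
  have hne : ν x ≠ 1 := fun h ↦ hx.not_ge (sInf_le ⟨x, h, rfl⟩)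
  refine EReal.toReal_lt_one ?_
  rcases hval x with h | ⟨-, h⟩
  · exact h ▸ EReal.bot_lt_coe 1
  · exact h.lt_of_ne hne

lemma exists_rightInfDeriv_lt_of_convIndex_lt {p : EReal} (hp0 : convIndex ν < p)
    (hp1 : p ≤ 1) :
    ∃ a : ℝ, alphaMin ν ≤ a ∧ (a : EReal) < alphaMax ν ∧ rightInfDeriv ν a < p := by
  obtain ⟨_, ⟨a, hmin, hmax, rfl⟩, hd⟩ :=
    sInf_lt_iff.1 ((min_lt_iff.1 hp0).resolve_left hp1.not_gt)
  exact ⟨a, hmin, hmax, hd⟩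

lemma frequently_slope_lt_of_rightInfDeriv_lt {a p : ℝ} (hd : rightInfDeriv ν a < p) :
    ∃ᶠ h in 𝓝[>] 0, ((ν (a + h)).toReal - (ν a).toReal) / h < p := by
  by_contra hcon
  have hev : ∀ᶠ h in 𝓝[>] (0 : ℝ),
      (p : EReal) ≤ ((((ν (a + h)).toReal - (ν a).toReal) / h : ℝ) : EReal) := by
    filter_upwards [not_frequently.1 hcon] with h hh
    exact_mod_cast not_lt.1 hh
  exact hd.not_ge (le_liminf_of_le (by isBoundedDefault) hev)

end Profile

theorem stmt19_general (ν : ℝ → EReal)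
    (hmono : Monotone ν)
    (hval : ∀ a : ℝ, ν a = ⊥ ∨ (0 ≤ ν a ∧ ν a ≤ 1))
    (p : ℝ) (hp0 : convIndex ν < (p : EReal)) (hp1 : p ≤ 1) :
    ∃ ε : ℝ, 0 < ε ∧ ∃ α α' : ℝ,
      alphaMin ν ≤ (α : EReal) ∧ α < α' ∧ (α' : EReal) < alphaMax ν ∧
      (ν α').toReal + ε < 1 ∧
      (ν α').toReal - (ν α).toReal + ε < p * (α' - α) ∧
      (p / (p + 1)) * ((α' - α) + ((ν α').toReal - (ν α).toReal + ε)) < 1 - (ν α).toReal := by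
  obtain ⟨a, hamin, hamax, hderiv⟩ :=
    exists_rightInfDeriv_lt_of_convIndex_lt hp0 (by exact_mod_cast hp1)
  obtain ⟨b, hab, hbmax⟩ := EReal.exists_between_coe_real hamax
  replace hab : a < b := by exact_mod_cast hab
  have hνa := toReal_lt_one_of_lt_alphaMax hval hamax
  obtain ⟨h, hslope, hh, hhδ⟩ := ((frequently_slope_lt_of_rightInfDeriv_lt hderiv).and_eventually
    (Ioo_mem_nhdsGT (lt_min (sub_pos.2 hab) (sub_pos.2 hνa)))).exists
  have hmax : ((a + h : ℝ) : EReal) < alphaMax ν :=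
    lt_trans (by exact_mod_cast (by linarith [hhδ.trans_le (min_le_left _ _)] : a + h < b)) hbmax
  obtain ⟨ε, hε, h₁, h₂, h₃⟩ := exists_pos_slack hp1 hh
    (monotone_toReal_of_profile hmono hval (le_add_of_nonneg_right hh.le))
    ((div_lt_iff₀ hh).1 hslope) (toReal_lt_one_of_lt_alphaMax hval hmax)
    (hhδ.trans_le (min_le_right _ _))
  refine ⟨ε, hε, a, a + h, hamin, lt_add_of_pos_right a hh, hmax, h₁, ?_, ?_⟩ <;>
    simpa only [add_sub_cancel_left]

theorem stmt19 (ν : ℝ → EReal)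
    (hmono : Monotone ν)
    (hrc : ∀ a : ℝ, ContinuousWithinAt ν (Set.Ici a) a)
    (hval : ∀ a : ℝ, ν a = ⊥ ∨ (0 ≤ ν a ∧ ν a ≤ 1))
    (hne : ∃ a : ℝ, ν a ≠ ⊥)
    (hint : alphaMin ν < alphaMax ν)
    (p : ℝ) (hp0 : convIndex ν < (p : EReal)) (hp1 : p ≤ 1) :
    ∃ ε : ℝ, 0 < ε ∧ ∃ α α' : ℝ,
      alphaMin ν ≤ (α : EReal) ∧ α < α' ∧ (α' : EReal) < alphaMax ν ∧
      (ν α').toReal + ε < 1 ∧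
      (ν α').toReal - (ν α).toReal + ε < p * (α' - α) ∧
      (p / (p + 1)) * ((α' - α) + ((ν α').toReal - (ν α).toReal + ε)) < 1 - (ν α).toReal :=
  stmt19_general ν hmono hval p hp0 hp1
end
end
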